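/- If G is a group isomorphic to a direct product A × F where A is a finite abelian group and F is a free group, and φ: A × F → G' is a surjective group homomorphism with kernel contained in A × {1}, and there exists an injective group homomorphism from A into G', then φ is an isomorphism. -/

import Mathlib

/-!
Every element of `A` has finite order, so each `ψ a` is the image of some `(a', w)` whose power
`(a', w) ^ n` lies in `ker φ ≤ A × {1}`; as free groups are torsion-free, `w = 1`. Hence the image
of `ψ`, a copy of `A`, lies in the image of `A × {1}`, which forces `φ` to be injective on the
finite group `A × {1}` and therefore, as `ker φ ≤ A × {1}`, everywhere.
-/

namespace MonoidHom

variable {A F G : Type*} [Group A] [Group F] [Group G]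

theorem injective_of_range_le [Finite A] {f g : A →* G} (hg : Function.Injective g)
    (hgf : g.range ≤ f.range) : Function.Injective f := by
  have : Finite f.range := Finite.of_surjective _ f.rangeRestrict_surjective
  have hcard : Nat.card A ≤ Nat.card f.range :=
    calc Nat.card A = Nat.card g.range := Nat.card_congr (ofInjective hg).toEquiv
      _ ≤ Nat.card f.range := Subgroup.card_le_of_le hgf
  rw [← f.rangeRestrict_injective_iff]
  exact ((Nat.bijective_iff_surjective_and_card _).mpr ⟨f.rangeRestrict_surjective,
    hcard.antisymm (Nat.card_le_card_of_surjective _ f.rangeRestrict_surjective)⟩).1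

theorem snd_eq_one_of_isOfFinOrder [IsMulTorsionFree F] {φ : A × F →* G}
    (hker : φ.ker ≤ (⊤ : Subgroup A).prod ⊥) {x : A × F} (hx : IsOfFinOrder (φ x)) :
    x.2 = 1 := by
  have hpow : x ^ orderOf (φ x) ∈ φ.ker := by
    rw [mem_ker, map_pow, pow_orderOf_eq_one]
  have hsnd := (Subgroup.mem_prod.mp (hker hpow)).2
  rw [Prod.pow_snd, Subgroup.mem_bot] at hsnd
  exact (pow_eq_one_iff_left hx.orderOf_pos.ne').mp hsnd

theorem mem_range_comp_inl_of_isOfFinOrder [IsMulTorsionFree F] {φ : A × F →* G}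
    (hφ : Function.Surjective φ) (hker : φ.ker ≤ (⊤ : Subgroup A).prod ⊥) {g : G}
    (hg : IsOfFinOrder g) : g ∈ (φ.comp (inl A F)).range := by
  obtain ⟨x, rfl⟩ := hφ g
  refine ⟨x.1, ?_⟩
  rw [comp_apply, inl_apply, ← snd_eq_one_of_isOfFinOrder hker hg]

theorem ker_eq_bot_of_ker_le_prod_bot {φ : A × F →* G} (hker : φ.ker ≤ (⊤ : Subgroup A).prod ⊥)
    (hinl : Function.Injective (φ.comp (inl A F))) : φ.ker = ⊥ := by
  refine (Subgroup.eq_bot_iff_forall _).mpr fun x hx => ?_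
  have hx₂ : x.2 = 1 := (Subgroup.mem_prod.mp (hker hx)).2
  have hx₁ : φ.comp (inl A F) x.1 = 1 := by
    rwa [comp_apply, inl_apply, ← hx₂]
  exact Prod.ext ((map_eq_one_iff _ hinl).mp hx₁) hx₂

end MonoidHom

theorem stmt_1_general {A : Type*} [CommGroup A] [Finite A] {σ : Type*}
    {G' : Type*} [Group G'] (φ : A × FreeGroup σ →* G')
    (hsurj : Function.Surjective φ)
    (hker : φ.ker ≤ (⊤ : Subgroup A).prod (⊥ : Subgroup (FreeGroup σ)))
    (ψ : A →* G') (hψ : Function.Injective ψ) :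
    Function.Bijective φ := by
  have hrange : ψ.range ≤ (φ.comp (MonoidHom.inl A (FreeGroup σ))).range := by
    rintro _ ⟨a, rfl⟩
    exact MonoidHom.mem_range_comp_inl_of_isOfFinOrder hsurj hker
      (ψ.isOfFinOrder (isOfFinOrder_of_finite a))
  have hinl := MonoidHom.injective_of_range_le hψ hrange
  exact ⟨(MonoidHom.ker_eq_bot_iff φ).mp (MonoidHom.ker_eq_bot_of_ker_le_prod_bot hker hinl),
    hsurj⟩

/-- If `φ : A × F → G'` is a surjective group homomorphism, where `A` is a
finite abelian group and `F` is a free group (of finite rank), with `ker φ ⊆ A × {1}`,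
and `A` injects into `G'`, then `φ` is an isomorphism. -/
theorem stmt_1 {A : Type*} [CommGroup A] [Finite A] {σ : Type*} [Finite σ]
    {G' : Type*} [Group G'] (φ : A × FreeGroup σ →* G')
    (hsurj : Function.Surjective φ)
    (hker : φ.ker ≤ (⊤ : Subgroup A).prod (⊥ : Subgroup (FreeGroup σ)))
    (ψ : A →* G') (hψ : Function.Injective ψ) :
    Function.Bijective φ :=
  stmt_1_general φ hsurj hker ψ hψ
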